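/- arXiv:1807.08463 — 7 statements merged into one kernel-verified Lean document; each statement's English description precedes it below -/
import Mathlib

section
/- Every tree G with at least 2 vertices admits a connecting transition set of size |V(G)| − 2. Explicitly, for any choice function f assigning to each vertex v of G a neighbor f(v) of v, the set T = { u v f(v) : v ∈ V(G), u a neighbor of v with u ≠ f(v) } is a connecting transition set of G of size |V(G)| − 2. -/
variable {V : Type*}

/-- The transition consisting of the edges `ab` and `bc`, written `abc`. -/
def transitionOf (a b c : V) : Sym2 (Sym2 V) := s(s(a, b), s(b, c))

/-- `t` is a transition of `G`: an unordered pair of two distinct adjacent edges. -/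
def SimpleGraph.IsTransition (G : SimpleGraph V) (t : Sym2 (Sym2 V)) : Prop :=
  ∃ a b c, G.Adj a b ∧ G.Adj b c ∧ a ≠ c ∧ t = transitionOf a b c

/-- A list of vertices (the support of a walk) is `T`-compatible: every pair of
consecutive edges is either a transition of `T` or a backtrack. -/
def TCompatible (T : Set (Sym2 (Sym2 V))) (l : List V) : Prop :=
  ∀ (i : ℕ) (h : i + 2 < l.length),
    l[i]'(by omega) = l[i + 2]'h ∨
    transitionOf (l[i]'(by omega)) (l[i + 1]'(by omega)) (l[i + 2]'h) ∈ T

/-- `G` is `T`-connected: every two vertices are joined by a `T`-compatible walk. -/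
def SimpleGraph.TConnected (G : SimpleGraph V) (T : Set (Sym2 (Sym2 V))) : Prop :=
  ∀ u v : V, ∃ p : G.Walk u v, TCompatible T p.support

/-- `T` is a connecting transition set of `G`. -/
def SimpleGraph.ConnectingTransitionSet (G : SimpleGraph V)
    (T : Finset (Sym2 (Sym2 V))) : Prop :=
  (∀ t ∈ T, G.IsTransition t) ∧ G.TConnected ↑T

/-- `H` is a connecting hypergraph of `G`: every hyperedge has at least two vertices and
induces a connected subgraph, and every pair of distinct non-adjacent vertices is
contained in a common hyperedge. -/
def SimpleGraph.ConnectingHypergraph (G : SimpleGraph V) (H : Finset (Finset V)) : Prop :=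
  (∀ E ∈ H, 2 ≤ E.card ∧ (G.induce (E : Set V)).Connected) ∧
  ∀ u v : V, u ≠ v → ¬G.Adj u v → ∃ E ∈ H, u ∈ E ∧ v ∈ E

/-- The cost of a hypergraph: the sum over hyperedges of (size − 2). -/
def hcost (H : Finset (Finset V)) : ℕ := ∑ E ∈ H, (E.card - 2)

/-- The quantity τ(G): the sum over co-connected components `C` of `G` with `|C| ≥ 2`
of `|C| − 2` if `G[C]` is connected and `|C| − 1` otherwise. -/
noncomputable def tau {V : Type*} [Fintype V] (G : SimpleGraph V) : ℕ := by
  classical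
  haveI : Fintype Gᶜ.ConnectedComponent := Fintype.ofFinite _
  exact ∑ C : Gᶜ.ConnectedComponent,
    if 2 ≤ C.supp.ncard then
      (if (G.induce C.supp).Connected then C.supp.ncard - 2 else C.supp.ncard - 1)
    else 0

/- ### Auxiliary machinery -/

lemma transitionOf_comm (a b c : V) : transitionOf a b c = transitionOf c b a := by
  unfold transitionOf
  rw [show s(c,b) = s(b,c) from Sym2.eq_swap, show s(b,a) = s(a,b) from Sym2.eq_swap,
    Sym2.eq_swap]

/-- A recursive version of `TCompatible`. -/
def Compat3 (T : Set (Sym2 (Sym2 V))) : List V → Prop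
  | a :: b :: c :: t => (a = c ∨ transitionOf a b c ∈ T) ∧ Compat3 T (b :: c :: t)
  | _ => True

lemma compat3_tail (T : Set (Sym2 (Sym2 V))) (x : V) (l : List V)
    (h : Compat3 T (x :: l)) : Compat3 T l := by
  match l with
  | [] => trivial
  | [a] => trivial
  | a :: b :: t => exact h.2

lemma tcompatible_of_compat3 (T : Set (Sym2 (Sym2 V))) :
    ∀ (l : List V), Compat3 T l → TCompatible T l
  | [], _, i, hi => by simp at hi
  | [a], _, i, hi => by simp at hi
  | [a, b], _, i, hi => by simp at hi
  | a :: b :: c :: t, h, i, hi => by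
      cases i with
      | zero => simpa using h.1
      | succ j =>
          have := tcompatible_of_compat3 T (b :: c :: t) h.2 j (by simpa using hi)
          simpa using this

section FixWalk

variable [DecidableEq V] {G : SimpleGraph V} {f : V → V}

/-- Insert a detour `u → f u → u` at every vertex whose successor in the walk
is not its chosen neighbor. -/
def fixWalk (hf : ∀ v, G.Adj v (f v)) : ∀ {u v : V}, G.Walk u v → G.Walk u v
  | _, _, .nil => .nil
  | u, _, .cons (v := b) h q =>
      if f u = b then .cons h (fixWalk hf q)
      else .cons (hf u) (.cons (hf u).symm (.cons h (fixWalk hf q)))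

lemma compat_fix {T : Set (Sym2 (Sym2 V))} (hf : ∀ v, G.Adj v (f v))
    (hmem : ∀ b x, G.Adj b x → x ≠ f b → transitionOf x b (f b) ∈ T)
    {u v : V} (p : G.Walk u v) :
    ∀ a : V, G.Adj a u → Compat3 T (a :: (fixWalk hf p).support) := by
  induction p with
  | nil => intro a ha; trivial
  | @cons u b v h q ih =>
      intro a ha
      rw [fixWalk]
      by_cases hb : f u = b
      · rw [if_pos hb]
        rw [SimpleGraph.Walk.support_cons, (fixWalk hf q).support_eq_cons]
        refine ⟨?_, ?_⟩
        · by_cases hab : a = b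
          · exact Or.inl hab
          · exact Or.inr (hb ▸ hmem u a ha.symm (fun e => hab (e.trans hb)))
        · have := ih u h
          rwa [(fixWalk hf q).support_eq_cons] at this
      · rw [if_neg hb]
        rw [SimpleGraph.Walk.support_cons, SimpleGraph.Walk.support_cons,
          SimpleGraph.Walk.support_cons, (fixWalk hf q).support_eq_cons]
        refine ⟨?_, Or.inl rfl, ?_, ?_⟩
        · by_cases haf : a = f u
          · exact Or.inl haf
          · exact Or.inr (hmem u a ha.symm haf)
        · exact Or.inr (transitionOf_comm (f u) u b ▸ hmem u b h (fun e => hb e.symm))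
        · have := ih u h
          rwa [(fixWalk hf q).support_eq_cons] at this

omit [DecidableEq V] in
lemma trans_eq {u v u' v' : V} (hu : G.Adj v u) (hu' : G.Adj v' u')
    (hfv : G.Adj v (f v)) (hfv' : G.Adj v' (f v'))
    (h1 : u ≠ f v) (h2 : u' ≠ f v')
    (he : transitionOf u v (f v) = transitionOf u' v' (f v')) :
    v = v' ∧ u = u' := by
  have hvu : v ≠ u := hu.ne
  have hvu' : v' ≠ u' := hu'.ne
  have hvf : v ≠ f v := hfv.ne
  have hvf' : v' ≠ f v' := hfv'.ne
  unfold transitionOf at he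
  simp only [Sym2.eq_iff] at he
  rcases he with (⟨(⟨e1, e2⟩ | ⟨e1, e2⟩), (⟨e3, e4⟩ | ⟨e3, e4⟩)⟩ |
    ⟨(⟨e1, e2⟩ | ⟨e1, e2⟩), (⟨e3, e4⟩ | ⟨e3, e4⟩)⟩) <;> subst_vars <;>
    first
      | exact ⟨rfl, rfl⟩
      | (exact absurd rfl hvu) | (exact absurd rfl hvu')
      | (exact absurd rfl hvf) | (exact absurd rfl hvf')
      | (exact absurd rfl h1) | (exact absurd rfl h2)
      | (exact absurd e1 h1) | (exact absurd e3.symm h1)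
      | simp_all

end FixWalk

/-- Every tree with at least 2 vertices: for any choice function `f` assigning to each
vertex a neighbor, the set of transitions `u v f(v)` over all vertices `v` and
neighbors `u ≠ f v` is a connecting transition set of size `|V(G)| − 2`. -/
theorem stmt0 {V : Type*} [Fintype V] [DecidableEq V] (G : SimpleGraph V)
    [DecidableRel G.Adj] (htree : G.IsTree) (h2 : 2 ≤ Fintype.card V)
    (f : V → V) (hf : ∀ v, G.Adj v (f v))
    (T : Finset (Sym2 (Sym2 V)))
    (hT : T = Finset.univ.biUnion fun v =>
      ((G.neighborFinset v).erase (f v)).image fun u => transitionOf u v (f v)) :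
    G.ConnectingTransitionSet T ∧ T.card = Fintype.card V - 2 := by
  classical
  subst hT
  set F : V → Finset (Sym2 (Sym2 V)) :=
    fun v => ((G.neighborFinset v).erase (f v)).image fun u => transitionOf u v (f v) with hF
  have memF : ∀ {t v}, t ∈ F v ↔ ∃ u, G.Adj v u ∧ u ≠ f v ∧ t = transitionOf u v (f v) := by
    intro t v
    simp only [hF, Finset.mem_image, Finset.mem_erase, SimpleGraph.mem_neighborFinset]
    constructor
    · rintro ⟨u, ⟨h1, h3⟩, rfl⟩; exact ⟨u, h3, h1, rfl⟩
    · rintro ⟨u, h3, h1, rfl⟩; exact ⟨u, ⟨h1, h3⟩, rfl⟩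
  constructor
  · constructor
    · intro t ht
      rw [Finset.mem_biUnion] at ht
      obtain ⟨v, -, ht⟩ := ht
      obtain ⟨u, hadj, hne, rfl⟩ := memF.1 ht
      exact ⟨u, v, f v, hadj.symm, hf v, hne, rfl⟩
    · intro x y
      have hmem : ∀ b z, G.Adj b z → z ≠ f b →
          transitionOf z b (f b) ∈ (↑(Finset.univ.biUnion F) : Set (Sym2 (Sym2 V))) := by
        intro b z hbz hzf
        rw [Finset.mem_coe, Finset.mem_biUnion]
        exact ⟨b, Finset.mem_univ b, memF.2 ⟨z, hbz, hzf, rfl⟩⟩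
      obtain ⟨p⟩ := htree.isConnected.preconnected x y
      exact ⟨fixWalk hf p, tcompatible_of_compat3 _ _
        (compat3_tail _ (f x) _ (compat_fix hf hmem p (f x) (hf x).symm))⟩
  · have hdisj : ∀ x ∈ Finset.univ, ∀ y ∈ (Finset.univ : Finset V), x ≠ y →
        Disjoint (F x) (F y) := by
      intro x _ y _ hxy
      rw [Finset.disjoint_left]
      intro t htx hty
      obtain ⟨u, hadj, hne, rfl⟩ := memF.1 htx
      obtain ⟨u', hadj', hne', he⟩ := memF.1 hty
      exact hxy (trans_eq hadj hadj' (hf x) (hf y) hne hne' he).1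
    rw [Finset.card_biUnion hdisj]
    have hc : ∀ v, (F v).card = G.degree v - 1 := by
      intro v
      rw [hF]
      rw [Finset.card_image_of_injOn, Finset.card_erase_of_mem
        (by rw [SimpleGraph.mem_neighborFinset]; exact hf v), SimpleGraph.degree]
      intro a ha b hb he
      simp only [Finset.coe_erase, Set.mem_diff, Finset.mem_coe,
        SimpleGraph.mem_neighborFinset, Set.mem_singleton_iff] at ha hb
      exact (trans_eq ha.1 hb.1 (hf v) (hf v) ha.2 hb.2 he).2
    simp only [hc]
    have hdeg : ∀ v, 1 ≤ G.degree v := by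
      intro v
      rw [← SimpleGraph.card_neighborFinset_eq_degree]
      exact Finset.card_pos.2 ⟨f v, by rw [SimpleGraph.mem_neighborFinset]; exact hf v⟩
    have key : ∑ v : V, (G.degree v - 1) + Fintype.card V = ∑ v : V, G.degree v := by
      calc ∑ v : V, (G.degree v - 1) + Fintype.card V
          = ∑ v : V, ((G.degree v - 1) + 1) := by
            rw [Finset.sum_add_distrib, Finset.sum_const, smul_eq_mul, mul_one,
              Finset.card_univ]
        _ = ∑ v : V, G.degree v := by
            exact Finset.sum_congr rfl fun v _ => Nat.sub_add_cancel (hdeg v)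
    have hsum : ∑ v : V, G.degree v = 2 * G.edgeFinset.card :=
      SimpleGraph.sum_degrees_eq_twice_card_edges G
    have hedges : G.edgeFinset.card + 1 = Fintype.card V := htree.card_edgeFinset
    omega
end

section
/- Every connected graph G with at least 2 vertices has a connecting transition set of size |V(G)| − 2. -/
variable {V : Type*}

lemma transitionOf_injective (a b : V) : Function.Injective (transitionOf a b) := by
  intro x y h
  simp only [transitionOf, Sym2.eq_iff] at h
  grind

lemma eq_of_transitionOf_eq {a b c d v w : V} (hab : a ≠ b) (hcd : c ≠ d)
    (h : transitionOf a v b = transitionOf c w d) : v = w := by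
  simp only [transitionOf, Sym2.eq_iff] at h
  grind

lemma tCompatible_cons_cons_cons {T : Set (Sym2 (Sym2 V))} {a b c : V} {l : List V} :
    TCompatible T (a :: b :: c :: l) ↔
      (a = c ∨ transitionOf a b c ∈ T) ∧ TCompatible T (b :: c :: l) := by
  refine ⟨fun h => ⟨h 0 (by simp), fun i hi => h (i + 1) (by simpa using hi)⟩, ?_⟩
  rintro ⟨habc, hl⟩ (_ | i) hi
  · exact habc
  · exact hl i (by simpa using hi)

lemma tCompatible_of_length_le_two (T : Set (Sym2 (Sym2 V))) {l : List V} (hl : l.length ≤ 2) :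
    TCompatible T l :=
  fun _ hi => absurd hi (by omega)

namespace SimpleGraph

/-- A walk entering `u` from `p` may leave it towards `q` through a transition of `T`. -/
def LinkAdj (G : SimpleGraph V) (T : Set (Sym2 (Sym2 V))) (u p q : V) : Prop :=
  G.Adj u q ∧ transitionOf p u q ∈ T

variable {G H : SimpleGraph V} {T : Set (Sym2 (Sym2 V))}

lemma exists_walk_tCompatible_cons (hHG : H ≤ G)
    (hlink : ∀ u a b, H.Adj u a → H.Adj u b → Relation.ReflTransGen (G.LinkAdj T u) a b)
    {u v a : V} (p : H.Walk u v) (hau : H.Adj a u) :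
    ∃ q : G.Walk u v, TCompatible T (a :: q.support) := by
  induction p generalizing a with
  | nil => exact ⟨.nil, tCompatible_of_length_le_two T (by simp)⟩
  | @cons u b v hub p ih =>
    obtain ⟨q, hq⟩ := ih hub
    refine (hlink u a b hau.symm hub).head_induction_on ?_ ?_
    · refine ⟨.cons (hHG hub) q, ?_⟩
      rw [Walk.support_cons, ← q.cons_tail_support] at *
      exact tCompatible_cons_cons_cons.2 ⟨.inl rfl, hq⟩
    · rintro c m ⟨hum, hcm⟩ - ⟨q', hq'⟩
      refine ⟨.cons hum (.cons hum.symm q'), ?_⟩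
      rw [Walk.support_cons, Walk.support_cons, ← q'.cons_tail_support] at *
      exact tCompatible_cons_cons_cons.2 ⟨.inr hcm, tCompatible_cons_cons_cons.2 ⟨.inl rfl, hq'⟩⟩

lemma tConnected_of_reflTransGen_link (hHG : H ≤ G) (hH : H.Connected)
    (hlink : ∀ u a b, H.Adj u a → H.Adj u b → Relation.ReflTransGen (G.LinkAdj T u) a b) :
    G.TConnected T := by
  intro u v
  obtain ⟨p⟩ := hH.preconnected u v
  cases p with
  | nil => exact ⟨.nil, tCompatible_of_length_le_two T (by simp)⟩
  | cons hub p =>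
    obtain ⟨q, hq⟩ := exists_walk_tCompatible_cons hHG hlink p hub
    exact ⟨.cons (hHG hub) q, hq⟩

section Star

variable [Fintype V] [DecidableEq V] (H : SimpleGraph V) [DecidableRel H.Adj] (c : V → V)

def starTransitions : Finset (Sym2 (Sym2 V)) :=
  Finset.univ.biUnion fun v => ((H.neighborFinset v).erase (c v)).image (transitionOf (c v) v)

variable {H c}

lemma mem_starTransitions {t : Sym2 (Sym2 V)} :
    t ∈ H.starTransitions c ↔ ∃ v x, H.Adj v x ∧ x ≠ c v ∧ transitionOf (c v) v x = t := by
  simp only [starTransitions, Finset.mem_biUnion, Finset.mem_univ, true_and, Finset.mem_image,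
    Finset.mem_erase, mem_neighborFinset]
  grind

lemma isTransition_of_mem_starTransitions (hHG : H ≤ G) (hc : ∀ v, H.Adj v (c v))
    {t : Sym2 (Sym2 V)} (ht : t ∈ H.starTransitions c) : G.IsTransition t := by
  obtain ⟨v, x, hvx, hxc, rfl⟩ := mem_starTransitions.1 ht
  exact ⟨c v, v, x, hHG (hc v).symm, hHG hvx, hxc.symm, rfl⟩

lemma card_starTransitions (hc : ∀ v, H.Adj v (c v)) :
    (H.starTransitions c).card = ∑ v, (H.degree v - 1) := by
  rw [starTransitions, Finset.card_biUnion]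
  · refine Finset.sum_congr rfl fun v _ => ?_
    rw [Finset.card_image_of_injective _ (transitionOf_injective _ _),
      Finset.card_erase_of_mem ((H.mem_neighborFinset v _).2 (hc v)),
      card_neighborFinset_eq_degree]
  · intro v _ w _ hvw
    simp only [Function.onFun, Finset.disjoint_left, Finset.mem_image, Finset.mem_erase]
    rintro _ ⟨x, ⟨hxv, -⟩, rfl⟩ ⟨y, ⟨hyw, -⟩, hyx⟩
    exact hvw (eq_of_transitionOf_eq hyw.symm hxv.symm hyx).symm

lemma reflTransGen_link_starTransitions (hHG : H ≤ G) (hc : ∀ v, H.Adj v (c v))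
    {u a b : V} (ha : H.Adj u a) (hb : H.Adj u b) :
    Relation.ReflTransGen (G.LinkAdj (H.starTransitions c) u) a b := by
  have hub : ∀ {x}, H.Adj u x → x ≠ c u → transitionOf (c u) u x ∈ H.starTransitions c :=
    fun hx hxc => mem_starTransitions.2 ⟨u, _, hx, hxc, rfl⟩
  have toHub : Relation.ReflTransGen (G.LinkAdj (H.starTransitions c) u) a (c u) := by
    by_cases hac : a = c u
    · rw [hac]
    · exact .single ⟨hHG (hc u), transitionOf_comm a u (c u) ▸ hub ha hac⟩
  by_cases hbc : b = c u
  · rwa [hbc]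
  · exact toHub.tail ⟨hHG hb, hub hb hbc⟩

end Star

end SimpleGraph

lemma SimpleGraph.IsTree.sum_degree_sub_one [Fintype V] {H : SimpleGraph V} [DecidableRel H.Adj]
    (hH : H.IsTree) (hV : 2 ≤ Fintype.card V) : ∑ v, (H.degree v - 1) = Fintype.card V - 2 := by
  have : Nontrivial V := Fintype.one_lt_card_iff_nontrivial.1 hV
  have hdeg : ∑ v, H.degree v = ∑ v, (H.degree v - 1) + Fintype.card V := by
    rw [← Finset.card_univ, Finset.card_eq_sum_ones, ← Finset.sum_add_distrib]
    exact Finset.sum_congr rfl fun v _ =>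
      (Nat.sub_add_cancel (hH.connected.preconnected.degree_pos_of_nontrivial v)).symm
  have hsum := H.sum_degrees_eq_twice_card_edges
  have hedges := hH.card_edgeFinset
  omega

theorem stmt3_general {V : Type*} [Fintype V] (G : SimpleGraph V)
    (hc : G.Connected) (h2 : 2 ≤ Fintype.card V) :
    ∃ T : Finset (Sym2 (Sym2 V)),
      G.ConnectingTransitionSet T ∧ T.card = Fintype.card V - 2 := by
  classical
  obtain ⟨H, hHG, hH⟩ := hc.exists_isTree_le
  have : Nontrivial V := Fintype.one_lt_card_iff_nontrivial.1 h2
  choose hub hhub using fun v => (H.degree_pos_iff_exists_adj v).1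
    (hH.connected.preconnected.degree_pos_of_nontrivial v)
  refine ⟨H.starTransitions hub, ⟨?_, ?_⟩, ?_⟩
  · exact fun t ht => SimpleGraph.isTransition_of_mem_starTransitions hHG hhub ht
  · exact SimpleGraph.tConnected_of_reflTransGen_link hHG hH.connected fun u a b ha hb =>
      SimpleGraph.reflTransGen_link_starTransitions hHG hhub ha hb
  · rw [SimpleGraph.card_starTransitions hhub, hH.sum_degree_sub_one h2]

/-- Every connected graph with at least 2 vertices has a connecting transition set of
size `|V(G)| − 2`. -/
theorem stmt3 {V : Type*} [Fintype V] [DecidableEq V] (G : SimpleGraph V)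
    (hc : G.Connected) (h2 : 2 ≤ Fintype.card V) :
    ∃ T : Finset (Sym2 (Sym2 V)),
      G.ConnectingTransitionSet T ∧ T.card = Fintype.card V - 2 :=
  stmt3_general G hc h2
end

section
/- Let G be a connected graph and let T be a connecting transition set of G. Then there exists a connecting hypergraph H of G with cost(H) = Σ_{E ∈ H} (|E| − 2) at most |T|. -/
variable {V : Type*}

/-!
Let `Γ` be the graph on `Sym2 V` whose edges are the transitions in `T`. For each component `C`
of `Γ` containing an edge of `G`, take as hyperedge the set of vertices incident to the edges of
`G` in `C`. The two edges of a transition share a vertex, so these edges form a connected graph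
on the hyperedge, whence it is connected and has at most `|C| + 1` vertices; and `Γ` is
connected on `C`, so `|C| ≤ |T_C| + 1`, where `T_C` are the transitions inside `C`. So each
hyperedge costs at most `|T_C|`, and the sets `T_C` are disjoint. A `T`-compatible walk never
leaves the component of its first edge, so its endpoints lie in a common hyperedge.
-/

open Finset

namespace SimpleGraph

theorem ncard_le_ncard_add_one_of_induce_connected {α : Type*} {Γ : SimpleGraph α} {S : Set α}
    (hS : (Γ.induce S).Connected) {t : Set (Sym2 α)} (ht : t.Finite)
    (hSt : ∀ a ∈ S, ∀ b ∈ S, Γ.Adj a b → s(a, b) ∈ t) : S.ncard ≤ t.ncard + 1 := by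
  have hinj : Set.InjOn (Sym2.map Subtype.val) (Γ.induce S).edgeSet :=
    (Sym2.map.injective Subtype.val_injective).injOn
  have hmaps : Set.MapsTo (Sym2.map Subtype.val) (Γ.induce S).edgeSet t := by
    rintro e he
    induction e using Sym2.ind with
    | _ a b => exact hSt a a.2 b b.2 he
  calc S.ncard = Nat.card S := (Nat.card_coe_set_eq S).symm
    _ ≤ Nat.card (Γ.induce S).edgeSet + 1 := hS.card_vert_le_card_edgeSet_add_one
    _ ≤ t.ncard + 1 := by
      rw [Nat.card_coe_set_eq]
      exact Nat.add_le_add_right (Set.ncard_le_ncard_of_injOn _ hmaps hinj ht) 1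

-- An edge `t` of `Γ` is assigned to the component of its endpoint `t.out.1`; both endpoints of
-- an edge lie in the same component, so the choice does not matter.
theorem ConnectedComponent.ncard_supp_le {α : Type*} {Γ : SimpleGraph α}
    [DecidableEq Γ.ConnectedComponent] (C : Γ.ConnectedComponent) (T : Finset (Sym2 α))
    (hT : Γ.edgeSet ⊆ T) :
    C.supp.ncard ≤ #{t ∈ T | Γ.connectedComponentMk t.out.1 = C} + 1 := by
  rw [← Set.ncard_coe_finset]
  refine ncard_le_ncard_add_one_of_induce_connected C.connected_toSimpleGraph (Set.toFinite _) ?_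
  intro a ha b _ hab
  refine Finset.mem_coe.mpr (Finset.mem_filter.mpr ⟨hT hab, ?_⟩)
  rcases Sym2.mem_iff.mp (Sym2.out_fst_mem s(a, b)) with h | h <;> rw [h]
  · exact ha
  · exact (C.mem_supp_congr_adj hab).mp ha

variable {G : SimpleGraph V}

theorem IsTransition.edges_share_vertex {e f : Sym2 V} (h : G.IsTransition s(e, f)) :
    e ∈ G.edgeSet ∧ f ∈ G.edgeSet ∧ ∃ b, b ∈ e ∧ b ∈ f := by
  obtain ⟨a, b, c, hab, hbc, -, ht⟩ := h
  rcases Sym2.eq_iff.mp ht with ⟨rfl, rfl⟩ | ⟨rfl, rfl⟩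
  · exact ⟨hab, hbc, b, Sym2.mem_mk_right a b, Sym2.mem_mk_left b c⟩
  · exact ⟨hbc, hab, b, Sym2.mem_mk_left b c, Sym2.mem_mk_right a b⟩

abbrev transitionGraph (T : Finset (Sym2 (Sym2 V))) : SimpleGraph (Sym2 V) := fromEdgeSet ↑T

namespace ConnectedComponent

section

variable {Γ : SimpleGraph (Sym2 V)} (C : Γ.ConnectedComponent) (G)

def edgeGraph : SimpleGraph V := fromEdgeSet (C.supp ∩ G.edgeSet)

def vertexSet : Set V := {v | ∃ e ∈ C.supp ∩ G.edgeSet, v ∈ e}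

variable {C G}

theorem edgeGraph_le : C.edgeGraph G ≤ G := fun _ _ h => h.1.2

theorem reachable_induce_vertexSet_of_mem {e : Sym2 V} (he : e ∈ C.supp ∩ G.edgeSet) {u v : V}
    (hu : u ∈ e) (hv : v ∈ e) :
    ((C.edgeGraph G).induce (C.vertexSet G)).Reachable ⟨u, e, he, hu⟩ ⟨v, e, he, hv⟩ := by
  by_cases huv : u = v
  · subst huv; rfl
  · obtain rfl : e = s(u, v) :=
      Sym2.eq_of_ne_mem huv hu hv (Sym2.mem_mk_left u v) (Sym2.mem_mk_right u v)
    exact Adj.reachable (⟨he, huv⟩ : (C.edgeGraph G).Adj u v)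

theorem two_le_ncard_vertexSet [Finite V] (hC : (C.supp ∩ G.edgeSet).Nonempty) :
    2 ≤ (C.vertexSet G).ncard := by
  obtain ⟨e, he⟩ := hC
  induction e using Sym2.ind with
  | _ x y =>
    rw [← Set.ncard_pair (G.ne_of_adj he.2)]
    refine Set.ncard_le_ncard ?_ (Set.toFinite _)
    rintro z (rfl | rfl)
    · exact ⟨_, he, Sym2.mem_mk_left _ _⟩
    · exact ⟨_, he, Sym2.mem_mk_right _ _⟩

end

section

variable {T : Finset (Sym2 (Sym2 V))} {C : (transitionGraph T).ConnectedComponent}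

theorem reachable_induce_vertexSet_of_walk (hT : ∀ t ∈ T, G.IsTransition t) {e f : Sym2 V}
    (p : (transitionGraph T).Walk e f) (he : e ∈ C.supp ∩ G.edgeSet) {u v : V} (hu : u ∈ e)
    (hv : v ∈ f) (hv' : v ∈ C.vertexSet G) :
    ((C.edgeGraph G).induce (C.vertexSet G)).Reachable ⟨u, e, he, hu⟩ ⟨v, hv'⟩ := by
  induction p generalizing u with
  | nil => exact C.reachable_induce_vertexSet_of_mem he hu hv
  | @cons e w f hew q ih =>
    obtain ⟨-, hwG, b, hbe, hbw⟩ := (hT _ hew.1).edges_share_vertex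
    have hw : w ∈ C.supp ∩ G.edgeSet := ⟨C.mem_supp_of_adj_mem_supp he.1 hew, hwG⟩
    exact (reachable_induce_vertexSet_of_mem he hu hbe).trans (ih hw hbw hv)

theorem connected_induce_vertexSet_edgeGraph (hT : ∀ t ∈ T, G.IsTransition t)
    (hC : (C.supp ∩ G.edgeSet).Nonempty) :
    ((C.edgeGraph G).induce (C.vertexSet G)).Connected := by
  obtain ⟨e, he⟩ := hC
  refine (connected_iff_exists_forall_reachable _).mpr
    ⟨⟨e.out.1, e, he, Sym2.out_fst_mem e⟩, ?_⟩
  rintro ⟨v, f, hf, hv⟩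
  exact reachable_induce_vertexSet_of_walk hT (C.reachable_of_mem_supp he.1 hf.1).some he
    (Sym2.out_fst_mem e) hv _

theorem connected_induce_vertexSet (hT : ∀ t ∈ T, G.IsTransition t)
    (hC : (C.supp ∩ G.edgeSet).Nonempty) : (G.induce (C.vertexSet G)).Connected :=
  (connected_induce_vertexSet_edgeGraph hT hC).mono fun _ _ h => edgeGraph_le (G := G) h

theorem ncard_vertexSet_le [Finite V] (hT : ∀ t ∈ T, G.IsTransition t)
    (hC : (C.supp ∩ G.edgeSet).Nonempty) : (C.vertexSet G).ncard ≤ C.supp.ncard + 1 :=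
  calc (C.vertexSet G).ncard ≤ (C.supp ∩ G.edgeSet).ncard + 1 :=
        ncard_le_ncard_add_one_of_induce_connected (connected_induce_vertexSet_edgeGraph hT hC)
          (Set.toFinite _) fun _ _ _ _ hab => hab.1
    _ ≤ C.supp.ncard + 1 := Nat.add_le_add_right (Set.ncard_inter_le_ncard_left _ _) 1

theorem ncard_vertexSet_le_card_filter [Finite V]
    [DecidableEq (transitionGraph T).ConnectedComponent]
    (hT : ∀ t ∈ T, G.IsTransition t) (hC : (C.supp ∩ G.edgeSet).Nonempty) :
    (C.vertexSet G).ncard ≤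
      #{t ∈ T | (transitionGraph T).connectedComponentMk t.out.1 = C} + 2 := by
  have hsupp := C.ncard_supp_le T (by simp)
  have := ncard_vertexSet_le hT hC
  omega

end

end ConnectedComponent

theorem TCompatible.of_cons {T : Set (Sym2 (Sym2 V))} {a : V} {l : List V}
    (h : TCompatible T (a :: l)) : TCompatible T l :=
  fun i hi => h (i + 1) (by simp only [List.length_cons]; omega)

theorem mem_vertexSet_of_tCompatible {T : Finset (Sym2 (Sym2 V))} {u w v : V} (huw : G.Adj u w)
    (q : G.Walk w v) (hq : TCompatible ↑T (Walk.cons huw q).support) :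
    v ∈ ((transitionGraph T).connectedComponentMk s(u, w)).vertexSet G := by
  induction q generalizing u with
  | nil => exact ⟨_, ⟨rfl, huw⟩, Sym2.mem_mk_right _ _⟩
  | @cons w x v hwx q ih =>
    have hmk : (transitionGraph T).connectedComponentMk s(w, x) =
        (transitionGraph T).connectedComponentMk s(u, w) := by
      rcases eq_or_ne u x with rfl | hux
      · rw [Sym2.eq_swap]
      · have htrans : transitionOf u w x ∈ T := by
          simpa [hux, q.support_getElem_zero] using hq 0 (by simp)
        have hne : s(u, w) ≠ s(w, x) := by
          rw [Ne, Sym2.eq_iff]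
          rintro (⟨rfl, -⟩ | ⟨rfl, -⟩)
          exacts [huw.ne rfl, hux rfl]
        exact (ConnectedComponent.connectedComponentMk_eq_of_adj
          ((fromEdgeSet_adj _).mpr ⟨htrans, hne⟩)).symm
    rw [← hmk]
    exact ih hwx (TCompatible.of_cons hq)

theorem TConnected.exists_mem_vertexSet {T : Finset (Sym2 (Sym2 V))} (hT : G.TConnected T)
    {u v : V} (huv : u ≠ v) : ∃ e ∈ G.edgeSet,
      u ∈ ((transitionGraph T).connectedComponentMk e).vertexSet G ∧
      v ∈ ((transitionGraph T).connectedComponentMk e).vertexSet G := by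
  obtain ⟨p, hp⟩ := hT u v
  cases p with
  | nil => exact absurd rfl huv
  | cons huw q =>
    exact ⟨_, huw, ⟨_, ⟨rfl, huw⟩, Sym2.mem_mk_left _ _⟩,
      mem_vertexSet_of_tCompatible huw q hp⟩

end SimpleGraph

open SimpleGraph in
theorem stmt6_general {V : Type*} [Fintype V] (G : SimpleGraph V)
    (T : Finset (Sym2 (Sym2 V))) (hT : G.ConnectingTransitionSet T) :
    ∃ H : Finset (Finset V), G.ConnectingHypergraph H ∧ hcost H ≤ T.card := by
  classical
  set comps := G.edgeFinset.image (transitionGraph T).connectedComponentMk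
  have hcomps : ∀ C ∈ comps, (C.supp ∩ G.edgeSet).Nonempty := by
    simp only [comps, mem_image, mem_edgeFinset]
    rintro _ ⟨e, he, rfl⟩
    exact ⟨e, rfl, he⟩
  refine ⟨comps.image fun C => (C.vertexSet G).toFinset, ⟨?_, fun u v huv _ => ?_⟩, ?_⟩
  · simp only [mem_image]
    rintro _ ⟨C, hC, rfl⟩
    rw [Set.coe_toFinset, ← Set.ncard_eq_toFinset_card']
    exact ⟨C.two_le_ncard_vertexSet (hcomps C hC),
      C.connected_induce_vertexSet hT.1 (hcomps C hC)⟩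
  · obtain ⟨e, he, hu, hv⟩ := hT.2.exists_mem_vertexSet huv
    exact ⟨_, mem_image_of_mem _ (mem_image_of_mem _ (mem_edgeFinset.mpr he)),
      Set.mem_toFinset.mpr hu, Set.mem_toFinset.mpr hv⟩
  · calc hcost _ ≤ ∑ C ∈ comps, ((C.vertexSet G).toFinset.card - 2) :=
          sum_image_le_of_nonneg fun _ _ => Nat.zero_le _
      _ ≤ ∑ C ∈ comps, #{t ∈ T | (transitionGraph T).connectedComponentMk t.out.1 = C} := by
          refine sum_le_sum fun C hC => ?_
          rw [← Set.ncard_eq_toFinset_card']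
          exact Nat.sub_le_iff_le_add.mpr (C.ncard_vertexSet_le_card_filter hT.1 (hcomps C hC))
      _ = #{t ∈ T | (transitionGraph T).connectedComponentMk t.out.1 ∈ comps} :=
          sum_card_fiberwise_eq_card_filter _ _ _
      _ ≤ #T := card_filter_le _ _

/-- From a connecting transition set `T` of a connected graph `G` one can obtain a
connecting hypergraph of `G` of cost at most `|T|`. -/
theorem stmt6 {V : Type*} [Fintype V] [DecidableEq V] (G : SimpleGraph V)
    (hc : G.Connected) (T : Finset (Sym2 (Sym2 V))) (hT : G.ConnectingTransitionSet T) :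
    ∃ H : Finset (Finset V), G.ConnectingHypergraph H ∧ hcost H ≤ T.card :=
  stmt6_general G T hT
end

section
/- Let G be a connected graph with at least 2 vertices that has a cut vertex (a vertex whose removal disconnects G). Then every connecting hypergraph of G has cost at least |V(G)| − 2; equivalently, the singleton hypergraph {V(G)} is an optimal connecting hypergraph of G. -/
variable {V : Type*}

/-!
Let `p` be a cut vertex and `A` one side of `G - p`, `B` the rest of `G - p`. A hyperedge meeting
both `A` and `B` induces a connected subgraph, so it contains `p`; every pair `a ∈ A`, `b ∈ B` is
non-adjacent, hence lies in such a crossing hyperedge. So the bipartite incidence graph between the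
crossing hyperedges `E` and the vertices of `G - p` is connected. It has `#crossing + |V| - 1`
vertices and `∑ (|E| - 1)` edges, and a connected graph has at least as many edges as vertices
minus one; this gives `∑ (|E| - 2) ≥ |V| - 2`.
-/
open Finset

section IncidenceGraph

variable {α β : Type*} {r : α → β → Prop}

def incidenceGraph (r : α → β → Prop) : SimpleGraph (α ⊕ β) where
  Adj
    | .inl a, .inr b => r a b
    | .inr b, .inl a => r a b
    | _, _ => False
  symm := ⟨by rintro (a | b) (a' | b') <;> simp⟩
  loopless := ⟨by rintro (a | b) <;> simp⟩

@[simp]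
lemma incidenceGraph_adj_inl_inr {a : α} {b : β} :
    (incidenceGraph r).Adj (.inl a) (.inr b) ↔ r a b := Iff.rfl

lemma nat_card_edgeSet_incidenceGraph :
    Nat.card (incidenceGraph r).edgeSet = Nat.card {x : α × β // r x.1 x.2} := by
  refine (Nat.card_eq_of_bijective
    (fun x => ⟨s(.inl x.1.1, .inr x.1.2), x.2⟩ : {x : α × β // r x.1 x.2} → _) ⟨?_, ?_⟩).symm
  · rintro ⟨⟨a, b⟩, _⟩ ⟨⟨a', b'⟩, _⟩ h
    simpa [Sym2.eq_iff] using congrArg Subtype.val h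
  · rintro ⟨⟨x, y⟩, he⟩
    rcases x with a | b <;> rcases y with a' | b'
    · exact he.elim
    · exact ⟨⟨(a, b'), he⟩, rfl⟩
    · exact ⟨⟨(a', b), he⟩, Subtype.ext Sym2.eq_swap⟩
    · exact he.elim

lemma SimpleGraph.Connected.card_add_card_le_sum_card_add_one [Fintype α] [Finite β]
    (h : (incidenceGraph r).Connected) :
    Nat.card α + Nat.card β ≤ ∑ a, Nat.card {b // r a b} + 1 := by
  rw [← Nat.card_sigma, ← Nat.card_congr (Equiv.subtypeProdEquivSigmaSubtype r),
    ← nat_card_edgeSet_incidenceGraph, ← Nat.card_sum]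
  exact h.card_vert_le_card_edgeSet_add_one

lemma incidenceGraph_reachable_of_rel {a a' : α} {b : β} (h : r a b) (h' : r a' b) :
    (incidenceGraph r).Reachable (.inl a) (.inl a') :=
  (incidenceGraph_adj_inl_inr.mpr h).reachable.trans
    (incidenceGraph_adj_inl_inr.mpr h').reachable.symm

lemma incidenceGraph_connected [Nonempty α] (hcov : ∀ b, ∃ a, r a b)
    (hreach : ∀ a a', (incidenceGraph r).Reachable (.inl a) (.inl a')) :
    (incidenceGraph r).Connected := by
  have hleft : ∀ u, ∃ a, (incidenceGraph r).Reachable u (.inl a) := by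
    rintro (a | b)
    · exact ⟨a, .rfl⟩
    · obtain ⟨a, hab⟩ := hcov b
      exact ⟨a, (incidenceGraph_adj_inl_inr.mpr hab).reachable.symm⟩
  let a₀ := Classical.arbitrary α
  refine (SimpleGraph.connected_iff_exists_forall_reachable _).mpr ⟨.inl a₀, fun w => ?_⟩
  obtain ⟨a, hw⟩ := hleft w
  exact (hreach a₀ a).trans hw.symm

end IncidenceGraph

namespace SimpleGraph

variable {G : SimpleGraph V}

lemma subset_of_induce_preconnected {S A : Set V} (hS : (G.induce S).Preconnected)
    (hA : ∀ u ∈ S, ∀ v ∈ S, u ∈ A → G.Adj u v → v ∈ A) {a : V} (ha : a ∈ S) (haA : a ∈ A) :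
    S ⊆ A := by
  suffices ∀ w : S, (G.induce S).Reachable ⟨a, ha⟩ w → (w : V) ∈ A from
    fun b hb => this ⟨b, hb⟩ (hS _ _)
  intro w hw
  rw [reachable_iff_reflTransGen] at hw
  induction hw with
  | refl => exact haA
  | tail _ hadj ih => exact hA _ (Subtype.prop _) _ (Subtype.prop _) ih hadj

structure IsCutSide (G : SimpleGraph V) (p : V) (A : Set V) : Prop where
  notMem : p ∉ A
  nonempty : A.Nonempty
  exists_notMem : ∃ b, b ≠ p ∧ b ∉ A
  mem_of_adj : ∀ {u v}, u ∈ A → v ≠ p → G.Adj u v → v ∈ A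

lemma exists_isCutSide {p q : V} (hp : ¬(G.induce {v | v ≠ p}).Connected) (hq : q ≠ p) :
    ∃ A, G.IsCutSide p A := by
  have : Nonempty {v | v ≠ p} := ⟨⟨q, hq⟩⟩
  obtain ⟨x, y, hxy⟩ : ∃ x y : {v | v ≠ p}, ¬(G.induce {v | v ≠ p}).Reachable x y := by
    by_contra! h
    exact hp ⟨h⟩
  refine ⟨{v | ∃ hv : v ≠ p, (G.induce {v | v ≠ p}).Reachable x ⟨v, hv⟩},
    fun ⟨hp, _⟩ => hp rfl, ⟨x, x.2, .rfl⟩, ⟨y, y.2, fun ⟨_, h⟩ => hxy h⟩, ?_⟩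
  rintro u v ⟨hu, hxu⟩ hv huv
  exact ⟨hv, hxu.trans (Adj.reachable (G := G.induce {v | v ≠ p}) (u := ⟨u, hu⟩) huv)⟩

end SimpleGraph

open Classical in
noncomputable def crossingHyperedges (p : V) (A : Set V) (H : Finset (Finset V)) :
    Finset (Finset V) :=
  H.filter fun E => (∃ a ∈ E, a ∈ A) ∧ ∃ b ∈ E, b ≠ p ∧ b ∉ A

lemma mem_crossingHyperedges {p : V} {A : Set V} {H : Finset (Finset V)} {E : Finset V} :
    E ∈ crossingHyperedges p A H ↔ E ∈ H ∧ (∃ a ∈ E, a ∈ A) ∧ ∃ b ∈ E, b ≠ p ∧ b ∉ A := by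
  classical
  rw [crossingHyperedges, mem_filter]

namespace SimpleGraph.IsCutSide

variable {G : SimpleGraph V} {p : V} {A : Set V} {H : Finset (Finset V)}

lemma mem_of_mem_crossingHyperedges (hA : G.IsCutSide p A) (hH : G.ConnectingHypergraph H)
    {E : Finset V} (hE : E ∈ crossingHyperedges p A H) : p ∈ E := by
  obtain ⟨hEH, ⟨a, haE, haA⟩, b, hbE, -, hbA⟩ := mem_crossingHyperedges.mp hE
  by_contra hpE
  refine hbA (subset_of_induce_preconnected (hH.1 E hEH).2.preconnected ?_ haE haA hbE)
  intro u _ v hv hu huv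
  exact hA.mem_of_adj hu (fun h => hpE (h ▸ hv)) huv

lemma exists_mem_crossingHyperedges (hA : G.IsCutSide p A) (hH : G.ConnectingHypergraph H)
    {a b : V} (ha : a ∈ A) (hbp : b ≠ p) (hbA : b ∉ A) :
    ∃ E ∈ crossingHyperedges p A H, a ∈ E ∧ b ∈ E := by
  obtain ⟨E, hEH, haE, hbE⟩ :=
    hH.2 a b (fun h => hbA (h ▸ ha)) (fun h => hbA (hA.mem_of_adj ha hbp h))
  exact ⟨E, mem_crossingHyperedges.mpr ⟨hEH, ⟨a, haE, ha⟩, b, hbE, hbp, hbA⟩, haE, hbE⟩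

lemma incidenceGraph_crossingHyperedges_connected (hA : G.IsCutSide p A)
    (hH : G.ConnectingHypergraph H) :
    (incidenceGraph fun (E : crossingHyperedges p A H) (v : {v // v ≠ p}) =>
      (v : V) ∈ (E : Finset V)).Connected := by
  obtain ⟨a₀, ha₀⟩ := hA.nonempty
  obtain ⟨b₀, hb₀p, hb₀A⟩ := hA.exists_notMem
  obtain ⟨E₀, hE₀, -⟩ := hA.exists_mem_crossingHyperedges hH ha₀ hb₀p hb₀A
  have : Nonempty (crossingHyperedges p A H) := ⟨⟨E₀, hE₀⟩⟩
  refine incidenceGraph_connected (fun v => ?_) (fun E F => ?_)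
  · by_cases hv : (v : V) ∈ A
    · obtain ⟨E, hE, hvE, -⟩ := hA.exists_mem_crossingHyperedges hH hv hb₀p hb₀A
      exact ⟨⟨E, hE⟩, hvE⟩
    · obtain ⟨E, hE, -, hvE⟩ := hA.exists_mem_crossingHyperedges hH ha₀ v.2 hv
      exact ⟨⟨E, hE⟩, hvE⟩
  · obtain ⟨-, ⟨a, haE, ha⟩, -⟩ := mem_crossingHyperedges.mp E.2
    obtain ⟨-, -, b, hbF, hbp, hbA⟩ := mem_crossingHyperedges.mp F.2
    obtain ⟨K, hK, haK, hbK⟩ := hA.exists_mem_crossingHyperedges hH ha hbp hbA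
    have hap : a ≠ p := fun h => hA.notMem (h ▸ ha)
    exact (incidenceGraph_reachable_of_rel (b := ⟨a, hap⟩) haE haK).trans
      (incidenceGraph_reachable_of_rel (a := ⟨K, hK⟩) (b := ⟨b, hbp⟩) hbK hbF)

lemma card_sub_two_le_hcost [Fintype V] (hA : G.IsCutSide p A) (hH : G.ConnectingHypergraph H) :
    Fintype.card V - 2 ≤ hcost H := by
  classical
  have hcount :=
    (hA.incidenceGraph_crossingHyperedges_connected hH).card_add_card_le_sum_card_add_one
  set C := crossingHyperedges p A H
  have hvert : Nat.card {v // v ≠ p} = Fintype.card V - 1 := by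
    rw [Nat.card_eq_fintype_card]
    exact Set.card_ne_eq p
  have hinc (E : Finset V) : Nat.card {v : {v // v ≠ p} // (v : V) ∈ E} = #(E.erase p) := by
    rw [← Nat.card_eq_finsetCard, Nat.card_congr (Equiv.subtypeSubtypeEquivSubtypeInter _ _)]
    exact Nat.card_congr (Equiv.subtypeEquivRight fun v => mem_erase.symm)
  have hsum : ∑ E ∈ C, (#E - 1) = ∑ E ∈ C, (#E - 2) + #C := by
    rw [card_eq_sum_ones, ← sum_add_distrib]
    refine sum_congr rfl fun E hE => ?_
    have := (hH.1 E (mem_crossingHyperedges.mp hE).1).1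
    omega
  have hsub : ∑ E ∈ C, (#E - 2) ≤ hcost H :=
    sum_le_sum_of_subset fun E hE => (mem_crossingHyperedges.mp hE).1
  have herase : ∀ E ∈ C, #(E.erase p) = #E - 1 :=
    fun E hE => card_erase_of_mem (hA.mem_of_mem_crossingHyperedges hH hE)
  simp only [hvert, hinc, Nat.card_eq_fintype_card, Fintype.card_coe] at hcount
  rw [sum_coe_sort C fun E => #(E.erase p), sum_congr rfl herase] at hcount
  omega

end SimpleGraph.IsCutSide

lemma SimpleGraph.Connected.connectingHypergraph_singleton_univ [Fintype V] {G : SimpleGraph V}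
    (hc : G.Connected) (h2 : 2 ≤ Fintype.card V) : G.ConnectingHypergraph {univ} := by
  refine ⟨fun E hE => ?_, fun u v _ _ => ⟨univ, mem_singleton_self _, mem_univ u, mem_univ v⟩⟩
  rw [mem_singleton.mp hE, card_univ, coe_univ]
  exact ⟨h2, (induceUnivIso G).connected_iff.mpr hc⟩

theorem stmt9_general {V : Type*} [Fintype V] (G : SimpleGraph V)
    (hc : G.Connected) (h2 : 2 ≤ Fintype.card V)
    (p : V) (hp : ¬(G.induce {v : V | v ≠ p}).Connected) :
    (∀ H : Finset (Finset V), G.ConnectingHypergraph H →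
      Fintype.card V - 2 ≤ hcost H) ∧
    G.ConnectingHypergraph {Finset.univ} ∧
    hcost ({Finset.univ} : Finset (Finset V)) = Fintype.card V - 2 := by
  have : Nontrivial V := Fintype.one_lt_card_iff_nontrivial.mp h2
  obtain ⟨q, hq⟩ := exists_ne p
  obtain ⟨A, hA⟩ := SimpleGraph.exists_isCutSide hp hq
  exact ⟨fun H hH => hA.card_sub_two_le_hcost hH, hc.connectingHypergraph_singleton_univ h2,
    by simp [hcost]⟩

/-- If a connected graph `G` with at least 2 vertices has a cut vertex, then every
connecting hypergraph of `G` has cost at least `|V(G)| − 2`; equivalently, the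
singleton hypergraph `{V(G)}` is an optimal connecting hypergraph. -/
theorem stmt9 {V : Type*} [Fintype V] [DecidableEq V] (G : SimpleGraph V)
    (hc : G.Connected) (h2 : 2 ≤ Fintype.card V)
    (p : V) (hp : ¬(G.induce {v : V | v ≠ p}).Connected) :
    (∀ H : Finset (Finset V), G.ConnectingHypergraph H →
      Fintype.card V - 2 ≤ hcost H) ∧
    G.ConnectingHypergraph {Finset.univ} ∧
    hcost ({Finset.univ} : Finset (Finset V)) = Fintype.card V - 2 :=
  stmt9_general G hc h2 p hp
end

section
/- Let G be a connected and co-connected graph with n vertices. Then every connecting hypergraph H of G satisfies cost(H) ≥ 2(n − 1)/3. -/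
variable {V : Type*}

/-!
Add the hyperedges of `H` one at a time and track the graph `K` of non-edges of `G` covered
so far. It starts with `n` components and, since `Gᶜ ≤ K` at the end, finishes with one.
A hyperedge `E` only adds edges inside the set `D` of vertices of `E` having a non-neighbour
in `E`, so it merges at most `|D| - 1` components. If `|E| ≥ 4` then `|D| - 1 ≤ |E| - 1 ≤
3(|E| - 2)/2`; if `|E| ≤ 3` the connected graph `G[E]` has a vertex adjacent to all others,
which is not in `D`, so `|D| - 1 ≤ |E| - 2`.
-/

open Finset

theorem Finite.card_le_card_add_card_sub_one_of_collisions_mem {α β : Type*} [Finite α]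
    [Finite β] (f : α → β) (S : Finset α) (hS : ∀ a b, f a = f b → a ≠ b → a ∈ S) :
    Nat.card α ≤ Nat.card β + (#S - 1) := by
  classical
  have := Fintype.ofFinite α
  have := Fintype.ofFinite β
  rw [Nat.card_eq_fintype_card, Nat.card_eq_fintype_card]
  obtain rfl | ⟨s, hs⟩ := S.eq_empty_or_nonempty
  · exact (Fintype.card_le_of_injective f fun a b hab ↦ by_contra fun hne ↦
      notMem_empty a (hS a b hab hne)).trans (Nat.le_add_right _ _)
  · have hinj : Set.InjOn f ((S.erase s)ᶜ : Finset α) := by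
      intro a ha b hb hab
      by_contra hne
      simp only [coe_compl, coe_erase, Set.mem_compl_iff, Set.mem_sdiff, mem_coe,
        Set.mem_singleton_iff, not_and, not_not] at ha hb
      exact hne ((ha (hS a b hab hne)).trans (hb (hS b a hab.symm (Ne.symm hne))).symm)
    have hT := card_le_card_of_injOn f (fun a _ ↦ mem_univ (f a)) hinj
    rw [card_compl, card_erase_of_mem hs, card_univ] at hT
    have := S.card_le_univ
    omega

namespace SimpleGraph

theorem card_connectedComponent_le_add_card_sub_one [Finite V] {K K' : SimpleGraph V}
    (hle : K ≤ K') (D : Finset V) (hD : ∀ u v, K'.Adj u v → ¬K.Adj u v → u ∈ D) :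
    Nat.card K.ConnectedComponent ≤ Nat.card K'.ConnectedComponent + (#D - 1) := by
  classical
  have hmerged : ∀ c₁ c₂ : K.ConnectedComponent, c₁.map (Hom.ofLE hle) = c₂.map (Hom.ofLE hle) →
      c₁ ≠ c₂ → c₁ ∈ D.image K.connectedComponentMk := by
    refine ConnectedComponent.ind₂ fun x y hxy hne ↦ ?_
    obtain ⟨p⟩ : K'.Reachable x y := ConnectedComponent.exact hxy
    have hnr : ¬K.Reachable x y := fun h ↦ hne (ConnectedComponent.sound h)
    obtain ⟨d, -, hxd, hyd⟩ :=
      p.exists_boundary_dart {z | K.Reachable x z} (Reachable.refl x) hnr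
    have hnadj : ¬K.Adj d.fst d.snd := fun h ↦ hyd (Reachable.trans hxd h.reachable)
    exact mem_image.mpr ⟨d.fst, hD _ _ d.adj hnadj, (ConnectedComponent.sound hxd).symm⟩
  have := Finite.card_le_card_add_card_sub_one_of_collisions_mem _ _ hmerged
  have := D.card_image_le (f := K.connectedComponentMk)
  omega

theorem Connected.exists_forall_adj_of_card_le_three {W : Type*} [Fintype W]
    {K : SimpleGraph W} (hK : K.Connected) (h3 : Fintype.card W ≤ 3) :
    ∃ c, ∀ w, w ≠ c → K.Adj c w := by
  classical
  by_contra! hnon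
  have hdeg : ∀ v, K.degree v + 2 ≤ Fintype.card W := by
    intro v
    obtain ⟨w, hwv, hvw⟩ := hnon v
    have hsub : K.neighborFinset v ⊆ ({v, w} : Finset W)ᶜ := by
      intro u hu
      rw [mem_neighborFinset] at hu
      simp only [mem_compl, mem_insert, mem_singleton, not_or]
      exact ⟨hu.ne', fun h ↦ hvw (h ▸ hu)⟩
    calc K.degree v + 2 = #(K.neighborFinset v) + #{v, w} := by
          rw [card_neighborFinset_eq_degree, card_pair hwv.symm]
      _ ≤ #({v, w}ᶜ) + #{v, w} := by gcongr
      _ = Fintype.card W := card_compl_add_card _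
  -- Degree sum: `2(n - 1) ≤ 2|E| ≤ n(n - 2)`, impossible for `1 ≤ n ≤ 3`.
  have hsum : ∑ v, (K.degree v + 2) ≤ ∑ _v : W, Fintype.card W := sum_le_sum fun v _ ↦ hdeg v
  rw [sum_add_distrib, sum_degrees_eq_twice_card_edges, sum_const, sum_const, card_univ,
    smul_eq_mul, smul_eq_mul] at hsum
  have hedges := hK.card_vert_le_card_edgeSet_add_one
  rw [Nat.card_eq_fintype_card, Nat.card_eq_fintype_card, ← edgeFinset_card] at hedges
  have hpos : 0 < Fintype.card W := Fintype.card_pos_iff.mpr hK.nonempty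
  interval_cases Fintype.card W <;> omega

theorem exists_two_mul_card_sub_one_le_of_induce_connected (G : SimpleGraph V) {E : Finset V}
    (hE : (G.induce (E : Set V)).Connected) :
    ∃ D : Finset V, (∀ u ∈ E, ∀ v ∈ E, Gᶜ.Adj u v → u ∈ D) ∧ 2 * (#D - 1) ≤ 3 * (#E - 2) := by
  classical
  by_cases h4 : 4 ≤ #E
  · exact ⟨E, fun u hu _ _ _ ↦ hu, by omega⟩
  obtain ⟨c, hc⟩ := hE.exists_forall_adj_of_card_le_three (by simp; omega)
  refine ⟨E.erase c, fun u hu v hv huv ↦ mem_erase.mpr ⟨?_, hu⟩, ?_⟩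
  · rintro rfl
    have hvu : (⟨v, hv⟩ : (E : Set V)) ≠ c := fun h ↦ huv.ne (congrArg Subtype.val h).symm
    exact ((compl_adj G _ _).mp huv).2 (hc _ hvu)
  · rw [card_erase_of_mem c.2]
    omega

def coveredCompl (G : SimpleGraph V) (S : Finset (Finset V)) : SimpleGraph V where
  Adj u v := Gᶜ.Adj u v ∧ ∃ E ∈ S, u ∈ E ∧ v ∈ E
  symm := ⟨fun _ _ ⟨huv, E, hE, hu, hv⟩ ↦ ⟨huv.symm, E, hE, hv, hu⟩⟩
  loopless := ⟨fun _ h ↦ h.1.ne rfl⟩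

theorem coveredCompl_empty (G : SimpleGraph V) : G.coveredCompl ∅ = ⊥ := by
  ext u v
  simp [coveredCompl]

theorem coveredCompl_mono (G : SimpleGraph V) {S T : Finset (Finset V)} (h : S ⊆ T) :
    G.coveredCompl S ≤ G.coveredCompl T :=
  fun _ _ ⟨huv, E, hE, hu, hv⟩ ↦ ⟨huv, E, h hE, hu, hv⟩

theorem two_mul_card_le_card_connectedComponent_coveredCompl_add_hcost [Fintype V]
    (G : SimpleGraph V) (S : Finset (Finset V))
    (hS : ∀ E ∈ S, (G.induce (E : Set V)).Connected) :
    2 * Fintype.card V ≤ 2 * Nat.card (G.coveredCompl S).ConnectedComponent + 3 * hcost S := by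
  classical
  induction S using Finset.induction_on with
  | empty =>
    have hinj : Function.Injective (G.coveredCompl ∅).connectedComponentMk := fun u v h ↦ by
      simpa [coveredCompl_empty, reachable_bot] using ConnectedComponent.exact h
    have := Nat.card_le_card_of_injective _ hinj
    rw [Nat.card_eq_fintype_card] at this
    omega
  | @insert E S hES ih =>
    obtain ⟨D, hD, hDE⟩ := G.exists_two_mul_card_sub_one_le_of_induce_connected
      (hS E (mem_insert_self E S))
    have hcomp := card_connectedComponent_le_add_card_sub_one
      (G.coveredCompl_mono (subset_insert E S)) D <| by
        rintro u v ⟨huv, E', hE', hu, hv⟩ hnot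
        obtain rfl | hE'S := mem_insert.mp hE'
        · exact hD u hu v hv huv
        · exact absurd ⟨huv, E', hE'S, hu, hv⟩ hnot
    have := ih fun E' hE' ↦ hS E' (mem_insert_of_mem hE')
    have hcost_insert : hcost (insert E S) = (#E - 2) + hcost S := sum_insert hES
    omega

end SimpleGraph

theorem stmt12_general {V : Type*} [Fintype V] (G : SimpleGraph V)
    (hcc : Gᶜ.Connected)
    (H : Finset (Finset V)) (hH : G.ConnectingHypergraph H) :
    2 * (Fintype.card V - 1) ≤ 3 * hcost H := by
  have hcover : Gᶜ ≤ G.coveredCompl H := fun u v huv ↦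
    ⟨huv, hH.2 u v huv.ne ((G.compl_adj u v).mp huv).2⟩
  have hone : Nat.card (G.coveredCompl H).ConnectedComponent ≤ 1 :=
    Finite.card_le_one_iff_subsingleton.mpr
      (hcc.preconnected.mono hcover).subsingleton_connectedComponent
  have := G.two_mul_card_le_card_connectedComponent_coveredCompl_add_hcost H
    fun E hE ↦ (hH.1 E hE).2
  omega

/-- Every connecting hypergraph of a connected and co-connected graph on `n` vertices
has cost at least `2(n − 1)/3`. -/
theorem stmt12 {V : Type*} [Fintype V] [DecidableEq V] (G : SimpleGraph V)
    (hc : G.Connected) (hcc : Gᶜ.Connected)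
    (H : Finset (Finset V)) (hH : G.ConnectingHypergraph H) :
    2 * (Fintype.card V - 1) ≤ 3 * hcost H :=
  stmt12_general G hcc H hH
end

section
/- Let G be a connected and co-connected graph with n vertices and let H = {E_1, …, E_k} be a connecting hypergraph of G with k hyperedges. Then cost(H) ≥ n − k − 1. -/
variable {V : Type*}

section Aux
set_option linter.unusedSectionVars false

variable [Fintype V] [DecidableEq V]

private def bud (E S : Finset V) : ℕ := if E ∩ S = ∅ then E.card - 1 else (E \ S).card

private lemma bud_mono {E S S' : Finset V} (h : S ⊆ S') : bud E S' ≤ bud E S := by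
  unfold bud
  by_cases h1 : E ∩ S = ∅
  · rw [if_pos h1]
    by_cases h2 : E ∩ S' = ∅
    · rw [if_pos h2]
    · rw [if_neg h2]
      obtain ⟨x, hx⟩ := Finset.nonempty_iff_ne_empty.2 h2
      have hss : E \ S' ⊂ E := (Finset.ssubset_iff_of_subset Finset.sdiff_subset).2
        ⟨x, (Finset.mem_inter.1 hx).1,
         fun hc => (Finset.mem_sdiff.1 hc).2 (Finset.mem_inter.1 hx).2⟩
      have := Finset.card_lt_card hss
      omega
  · have h2 : E ∩ S' ≠ ∅ := by
      intro hc
      exact h1 (Finset.subset_empty.1 (hc ▸ Finset.inter_subset_inter (Finset.Subset.refl E) h))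
    rw [if_neg h1, if_neg h2]
    exact Finset.card_le_card (Finset.sdiff_subset_sdiff (Finset.Subset.refl E) h)

private lemma key (G : SimpleGraph V) (hcc : Gᶜ.Preconnected) (H : Finset (Finset V))
    (hcov : ∀ u v : V, u ≠ v → ¬G.Adj u v → ∃ E ∈ H, u ∈ E ∧ v ∈ E) :
    ∀ n (S : Finset V), Sᶜ.card = n → S.Nonempty → Sᶜ.card ≤ ∑ E ∈ H, bud E S := by
  intro n
  induction n using Nat.strong_induction_on with
  | _ n ih =>
    intro S hcard hS
    rcases Finset.eq_empty_or_nonempty Sᶜ with he | ⟨v, hv⟩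
    · simp [he]
    · obtain ⟨u, hu⟩ := hS
      obtain ⟨p⟩ := hcc u v
      obtain ⟨d, _, hdf, hds⟩ := p.exists_boundary_dart (↑S : Set V)
        (by simpa using hu) (by simpa using (Finset.mem_compl.1 hv))
      have hadj : Gᶜ.Adj d.fst d.snd := d.adj
      rw [SimpleGraph.compl_adj] at hadj
      obtain ⟨E, hEH, hu'E, hv'E⟩ := hcov d.fst d.snd hadj.1 hadj.2
      set S' := S ∪ E with hS'
      have hsub : S ⊆ S' := Finset.subset_union_left
      have hvS : d.snd ∉ S := by simpa using hds
      have huS : d.fst ∈ S := by simpa using hdf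
      -- card split
      have hcomplS' : S'ᶜ = Sᶜ \ E := by
        ext x; simp [hS', not_or, Finset.mem_sdiff]
      have hsplit : Sᶜ.card = (E \ S).card + S'ᶜ.card := by
        rw [hcomplS']
        have h1 : (Sᶜ ∩ E).card + (Sᶜ \ E).card = Sᶜ.card :=
          Finset.card_inter_add_card_sdiff _ _
        have h2 : E \ S = Sᶜ ∩ E := by
          ext x; simp [Finset.mem_sdiff, and_comm]
        rw [h2]; omega
      have hlt : S'ᶜ.card < n := by
        rw [← hcard, hcomplS']
        apply Finset.card_lt_card
        refine (Finset.ssubset_iff_of_subset Finset.sdiff_subset).2 ⟨d.snd, ?_, ?_⟩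
        · exact Finset.mem_compl.2 hvS
        · intro hc; exact (Finset.mem_sdiff.1 hc).2 hv'E
      have hIH : S'ᶜ.card ≤ ∑ E' ∈ H, bud E' S' :=
        ih _ hlt S' rfl ⟨u, hsub hu⟩
      -- budget drop for E
      have hbudE : bud E S' = 0 := by
        unfold bud
        rw [if_neg (by
          intro hc
          have : d.fst ∈ E ∩ S' := Finset.mem_inter.2 ⟨hu'E, hsub huS⟩
          simp [hc] at this)]
        have : E \ S' = ∅ := by
          ext x; simp [hS']; tauto
        simp [this]
      have hbudES : bud E S = (E \ S).card := by
        unfold bud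
        rw [if_neg (by
          intro hc
          have : d.fst ∈ E ∩ S := Finset.mem_inter.2 ⟨hu'E, huS⟩
          simp [hc] at this)]
      -- sum comparison
      have hsum : ∑ E' ∈ H, bud E' S' + (E \ S).card ≤ ∑ E' ∈ H, bud E' S := by
        rw [← Finset.sum_erase_add H _ hEH, ← Finset.sum_erase_add H (fun E' => bud E' S) hEH]
        have h3 : ∑ E' ∈ H.erase E, bud E' S' ≤ ∑ E' ∈ H.erase E, bud E' S :=
          Finset.sum_le_sum fun E' _ => bud_mono hsub
        rw [hbudE, hbudES]
        omega
      omega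

end Aux

/-- Every connecting hypergraph with `k` hyperedges of a connected and co-connected
graph on `n` vertices has cost at least `n − k − 1`. -/

theorem stmt13 {V : Type*} [Fintype V] [DecidableEq V] (G : SimpleGraph V)
    (hc : G.Connected) (hcc : Gᶜ.Connected)
    (H : Finset (Finset V)) (hH : G.ConnectingHypergraph H) :
    (Fintype.card V : ℤ) - H.card - 1 ≤ (hcost H : ℤ) := by
  unfold hcost
  obtain ⟨v₀⟩ := hcc.nonempty
  have hkey := key G hcc.preconnected H hH.2 _ ({v₀} : Finset V) rfl ⟨v₀, Finset.mem_singleton_self v₀⟩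
  have hbud : ∀ E ∈ H, bud E {v₀} ≤ E.card - 1 := by
    intro E _
    unfold bud
    split
    · exact le_rfl
    · next h =>
      have hv : v₀ ∈ E := by
        by_contra hc'
        exact h (by ext x; simp; rintro hx rfl; exact hc' hx)
      rw [Finset.sdiff_singleton_eq_erase, Finset.card_erase_of_mem hv]
  have h1 : ({v₀} : Finset V)ᶜ.card ≤ ∑ E ∈ H, (E.card - 1) :=
    le_trans hkey (Finset.sum_le_sum hbud)
  have h2 : ({v₀} : Finset V)ᶜ.card = Fintype.card V - 1 := by
    rw [Finset.card_compl, Finset.card_singleton]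
  have h3 : ∑ E ∈ H, (E.card - 1) ≤ (∑ E ∈ H, (E.card - 2)) + H.card := by
    calc ∑ E ∈ H, (E.card - 1) ≤ ∑ E ∈ H, ((E.card - 2) + 1) :=
          Finset.sum_le_sum fun E _ => by omega
      _ = (∑ E ∈ H, (E.card - 2)) + H.card := by
          rw [Finset.sum_add_distrib, Finset.sum_const, smul_eq_mul, mul_one]
  have hpos : 1 ≤ Fintype.card V := Fintype.card_pos_iff.2 ⟨v₀⟩
  have : Fintype.card V ≤ (∑ E ∈ H, (E.card - 2)) + H.card + 1 := by omega
  have h4 : (Fintype.card V : ℤ) ≤ ((∑ E ∈ H, (E.card - 2) : ℕ) : ℤ) + H.card + 1 := by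
    exact_mod_cast this
  omega
end

section
/- For every connected graph G, every connecting transition set T of G has size at least (2/3)·τ(G), where τ(G) is the sum, over all co-connected components C of G with |C| ≥ 2, of (|C| − 2) if the subgraph of G induced by C is connected, and of (|C| − 1) otherwise. Combined with the existence of a connecting transition set of size τ(G), this yields a 3/2-approximation for the minimum connecting transition set problem. -/
variable {V : Type*}

/-!
Call two transitions of `T` adjacent when they share an edge, and for a component `c` of this
graph let `V_c` (`componentVerts c`) be the set of vertices its transitions cover. Consecutive
transitions used by a `T`-compatible walk share an edge (a backtrack repeats an edge), so a walk
joining non-adjacent vertices stays inside a single `V_c`: every non-edge of `G` lies in some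
`V_c`. Growing `c` one transition at a time, each new transition shares an edge, hence two of its
three vertices, with an earlier one, so `|V_c| ≤ |c| + 2`.

Let `W_c ⊆ V_c` (`componentNonAdjVerts G c`) be the vertices meeting a non-edge inside `V_c`.
The sets `W_c` cover the edges of the complement of `G`, so they connect every co-connected
component `C`, and a BFS count gives `∑_C (|C| - 1) ≤ ∑_c (|W_c| - 1)`. Moreover
`2 (|W_c| - 1) ≤ 3 |c|`: for `|c| ≥ 2` this follows from `|W_c| ≤ |c| + 2`, and a single
transition `abd` has `W_c ⊆ {a, d}` since `b` is adjacent to `a` and `d`. As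
`τ(G) ≤ ∑_C (|C| - 1)`, summing over `c` gives `2 τ(G) ≤ 3 |T|`.
-/

open Finset

theorem Finset.card_filter_exists_lt_le {α β : Type*} [LinearOrder β] (s : Finset α) (g : α → β) :
    #{v ∈ s | ∃ u ∈ s, g u < g v} ≤ #s - 1 := by
  classical
  rcases s.eq_empty_or_nonempty with rfl | hs
  · simp
  obtain ⟨m, hm, hmin⟩ := s.exists_min_image g hs
  calc #{v ∈ s | ∃ u ∈ s, g u < g v} ≤ #(s.erase m) := by
        refine card_le_card fun v hv => ?_
        obtain ⟨hvs, u, hus, hu⟩ := mem_filter.1 hv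
        exact mem_erase.2 ⟨by rintro rfl; exact (hmin u hus).not_gt hu, hvs⟩
    _ = #s - 1 := card_erase_of_mem hm

namespace SimpleGraph

variable {α : Type*} {Γ : SimpleGraph α}

theorem Reachable.exists_adj_dist_lt {a v : α} (h : Γ.Reachable a v) (hne : a ≠ v) :
    ∃ u, Γ.Adj u v ∧ Γ.dist a u < Γ.dist a v := by
  obtain ⟨p, hp⟩ := h.exists_walk_length_eq_dist
  have hnil : ¬p.Nil := fun hn => hne hn.eq
  refine ⟨p.penultimate, p.adj_penultimate hnil, ?_⟩
  have := Walk.length_dropLast_add_one hnil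
  have := Γ.dist_le p.dropLast
  omega

theorem sum_ncard_supp [Finite α] [Fintype Γ.ConnectedComponent] :
    ∑ C : Γ.ConnectedComponent, C.supp.ncard = Nat.card α := by
  rw [← Nat.card_congr (Equiv.sigmaFiberEquiv Γ.connectedComponentMk), Nat.card_sigma]
  rfl

theorem sum_ncard_supp_sub_one_le {ι : Type*} [Finite α] [Fintype ι] [Fintype Γ.ConnectedComponent]
    (S : ι → Finset α) (hS : ∀ u v, Γ.Adj u v → ∃ i, u ∈ S i ∧ v ∈ S i) :
    ∑ C : Γ.ConnectedComponent, (C.supp.ncard - 1) ≤ ∑ i, (#(S i) - 1) := by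
  classical
  have := Fintype.ofFinite α
  have hmk : Function.Surjective Γ.connectedComponentMk := Quot.mk_surjective
  let rep := Function.surjInv hmk
  let root (v : α) : α := rep (Γ.connectedComponentMk v)
  have hroot (v : α) : Γ.Reachable (root v) v :=
    ConnectedComponent.exact (Function.surjInv_eq hmk _)
  let nonroots : Finset α := {v | root v ≠ v}
  have hcount : ∑ C : Γ.ConnectedComponent, (C.supp.ncard - 1) = #nonroots := by
    have hroots : #{v | root v = v} = Fintype.card Γ.ConnectedComponent := by
      have : ({v | root v = v} : Finset α) = univ.image rep := by
        ext v
        simp only [mem_filter, mem_univ, true_and, mem_image]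
        refine ⟨fun h => ⟨_, h⟩, ?_⟩
        rintro ⟨C, rfl⟩
        exact congrArg rep (Function.surjInv_eq hmk C)
      rw [this, card_image_of_injective _ (Function.injective_surjInv hmk), card_univ]
    have hpos (C : Γ.ConnectedComponent) : 1 ≤ C.supp.ncard := C.nonempty_supp.ncard_pos
    have hsplit := card_filter_add_card_filter_not (s := univ) fun v => root v = v
    rw [sum_tsub_distrib _ fun C _ => hpos C, sum_ncard_supp, sum_const, card_univ, smul_eq_mul,
      mul_one, Nat.card_eq_fintype_card]
    rw [card_univ, hroots] at hsplit
    exact Nat.sub_eq_of_eq_add' hsplit.symm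
  have hcover : nonroots ⊆ univ.biUnion fun i =>
      {v ∈ S i | ∃ u ∈ S i, Γ.dist (root u) u < Γ.dist (root v) v} := by
    intro v hv
    obtain ⟨u, huv, hdist⟩ := (hroot v).exists_adj_dist_lt (mem_filter.1 hv).2
    obtain ⟨i, hu, hv⟩ := hS u v huv
    have : root u = root v := congrArg rep (ConnectedComponent.sound huv.reachable)
    exact mem_biUnion.2 ⟨i, mem_univ _, mem_filter.2 ⟨hv, u, hu, this ▸ hdist⟩⟩
  calc ∑ C : Γ.ConnectedComponent, (C.supp.ncard - 1) = #nonroots := hcount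
    _ ≤ ∑ i, #{v ∈ S i | ∃ u ∈ S i, Γ.dist (root u) u < Γ.dist (root v) v} :=
      (card_le_card hcover).trans card_biUnion_le
    _ ≤ ∑ i, (#(S i) - 1) := sum_le_sum fun i _ => card_filter_exists_lt_le _ _

theorem ConnectedComponent.card_biUnion_supp_le {β : Type*} [DecidableEq β]
    (c : Γ.ConnectedComponent) [Fintype c.supp] (f : α → Finset β) {k : ℕ}
    (hf : ∀ i j, Γ.Adj i j → #(f j \ f i) ≤ k) {i₀ : α} (hi₀ : i₀ ∈ c.supp) :
    #(c.supp.toFinset.biUnion f) ≤ #(f i₀) + k * (c.supp.ncard - 1) := by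
  classical
  set s := c.supp.toFinset
  let new (j : α) : Finset β := {b ∈ f j | ∀ i ∈ s, Γ.dist i₀ i < Γ.dist i₀ j → b ∉ f i}
  have hcover : s.biUnion f ⊆ s.biUnion new := by
    intro b hb
    obtain ⟨j, hj, hbj⟩ := mem_biUnion.1 hb
    obtain ⟨m, hm, hmin⟩ :=
      exists_min_image {i ∈ s | b ∈ f i} (Γ.dist i₀) ⟨j, mem_filter.2 ⟨hj, hbj⟩⟩
    obtain ⟨hms, hbm⟩ := mem_filter.1 hm
    refine mem_biUnion.2 ⟨m, hms, mem_filter.2 ⟨hbm, fun i hi hlt hbi => ?_⟩⟩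
    exact (hmin i (mem_filter.2 ⟨hi, hbi⟩)).not_gt hlt
  have hnew {j : α} (hj : j ∈ s) (hne : i₀ ≠ j) : #(new j) ≤ k := by
    have hreach : Γ.Reachable i₀ j := by
      rw [Set.mem_toFinset, ConnectedComponent.mem_supp_iff] at hj
      exact ConnectedComponent.exact (hi₀.trans hj.symm)
    obtain ⟨p, hpj, hdist⟩ := hreach.exists_adj_dist_lt hne
    have hp : p ∈ s := by
      rw [Set.mem_toFinset, ConnectedComponent.mem_supp_iff] at hj ⊢
      exact (ConnectedComponent.sound hpj.reachable).trans hj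
    refine (card_le_card fun b hb => ?_).trans (hf p j hpj)
    obtain ⟨hbj, hbnew⟩ := mem_filter.1 hb
    exact mem_sdiff.2 ⟨hbj, hbnew p hp hdist⟩
  have hi₀s : i₀ ∈ s := Set.mem_toFinset.2 hi₀
  calc #(s.biUnion f) ≤ ∑ j ∈ s, #(new j) := (card_le_card hcover).trans card_biUnion_le
    _ = #(new i₀) + ∑ j ∈ s.erase i₀, #(new j) := (add_sum_erase _ _ hi₀s).symm
    _ ≤ #(f i₀) + ∑ j ∈ s.erase i₀, k := by
      gcongr with j hj
      · exact filter_subset _ _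
      · exact hnew (mem_of_mem_erase hj) (ne_of_mem_erase hj).symm
    _ = #(f i₀) + k * (c.supp.ncard - 1) := by
      rw [sum_const, card_erase_of_mem hi₀s, smul_eq_mul, mul_comm, Set.ncard_eq_toFinset_card']

end SimpleGraph

open scoped Classical

section Transitions

variable {T : Finset (Sym2 (Sym2 V))}

def edgeSharingGraph (T : Finset (Sym2 (Sym2 V))) : SimpleGraph T where
  Adj t t' := t ≠ t' ∧ ∃ e ∈ t.1, e ∈ t'.1
  symm := ⟨fun _ _ ⟨hne, e, he, he'⟩ => ⟨hne.symm, e, he', he⟩⟩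
  loopless := ⟨fun _ h => h.1 rfl⟩

noncomputable def transitionVerts (t : Sym2 (Sym2 V)) : Finset V := t.toFinset.biUnion Sym2.toFinset

lemma mem_transitionVerts {t : Sym2 (Sym2 V)} {x : V} :
    x ∈ transitionVerts t ↔ ∃ e ∈ t, x ∈ e := by
  simp [transitionVerts]

lemma transitionVerts_transitionOf (a b c : V) :
    transitionVerts (transitionOf a b c) = {a, b, c} := by
  ext x
  simp [transitionVerts, transitionOf, Sym2.toFinset_mk_eq]

lemma card_transitionVerts_transitionOf_le (a b c : V) :
    #(transitionVerts (transitionOf a b c)) ≤ 3 :=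
  transitionVerts_transitionOf a b c ▸ card_le_three

lemma card_transitionVerts_transitionOf_sdiff_le {a b c : V} {e : Sym2 V}
    (he : e ∈ transitionOf a b c) :
    #(transitionVerts (transitionOf a b c) \ e.toFinset) ≤ 1 := by
  rw [transitionVerts_transitionOf, card_le_one]
  intro x hx y hy
  simp only [mem_sdiff, mem_insert, mem_singleton, Sym2.mem_toFinset] at hx hy
  rcases Sym2.mem_iff.1 he with rfl | rfl <;> simp only [Sym2.mem_iff] at hx hy <;> grind

lemma TCompatible.tail {T : Set (Sym2 (Sym2 V))} {a : V} {l : List V}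
    (h : TCompatible T (a :: l)) : TCompatible T l := by
  intro i hi
  have := h (i + 1) (by simp only [List.length_cons]; omega)
  simpa using this

noncomputable def componentVerts (c : (edgeSharingGraph T).ConnectedComponent) : Finset V :=
  c.supp.toFinset.biUnion fun t => transitionVerts t.1

lemma mem_componentVerts {c : (edgeSharingGraph T).ConnectedComponent} {x : V} :
    x ∈ componentVerts c ↔ ∃ t ∈ c.supp, ∃ e ∈ t.1, x ∈ e := by
  simp [componentVerts, mem_transitionVerts]

lemma mem_supp_of_shared_edge {c : (edgeSharingGraph T).ConnectedComponent} {t t' : T}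
    (ht : t ∈ c.supp) {e : Sym2 V} (he : e ∈ t.1) (he' : e ∈ t'.1) : t' ∈ c.supp := by
  by_cases htt' : t = t'
  · exact htt' ▸ ht
  · have hadj : (edgeSharingGraph T).Adj t t' := ⟨htt', e, he, he'⟩
    exact c.mem_supp_of_adj_mem_supp ht hadj

lemma TCompatible.mem_pair_or_mem_componentVerts {a b : V} {l : List V}
    (h : TCompatible (↑T) (a :: b :: l)) :
    (∀ x ∈ l, x = a ∨ x = b) ∨ ∃ c : (edgeSharingGraph T).ConnectedComponent,
      (∃ t ∈ c.supp, s(a, b) ∈ t.1) ∧ ∀ x ∈ l, x ∈ componentVerts c := by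
  induction l generalizing a b with
  | nil => simp
  | cons d l ih =>
    have h₀ := h 0 (by simp)
    simp only [List.getElem_cons_zero, List.getElem_cons_succ] at h₀
    rcases h₀ with rfl | htr
    · rcases ih h.tail with hl | ⟨c, ⟨t, ht, hba⟩, hl⟩
      · refine .inl fun x hx => ?_
        rcases List.mem_cons.1 hx with rfl | hx
        · exact .inl rfl
        · exact (hl x hx).symm
      · refine .inr ⟨c, ⟨t, ht, Sym2.eq_swap ▸ hba⟩, fun x hx => ?_⟩
        rcases List.mem_cons.1 hx with rfl | hx
        · exact mem_componentVerts.2 ⟨t, ht, _, hba, Sym2.mem_mk_right _ _⟩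
        · exact hl x hx
    · let t : T := ⟨_, htr⟩
      have hab : s(a, b) ∈ t.1 := Sym2.mem_mk_left _ _
      have hbd : s(b, d) ∈ t.1 := Sym2.mem_mk_right _ _
      rcases ih h.tail with hl | ⟨c, ⟨t', ht', hbd'⟩, hl⟩
      · refine .inr ⟨_, ⟨t, rfl, hab⟩, fun x hx => ?_⟩
        have hx : x = b ∨ x = d := by
          rcases List.mem_cons.1 hx with rfl | hx
          · exact .inr rfl
          · exact hl x hx
        exact mem_componentVerts.2 ⟨t, rfl, s(b, d), hbd, Sym2.mem_iff.2 hx⟩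
      · have ht : t ∈ c.supp := mem_supp_of_shared_edge ht' hbd' hbd
        refine .inr ⟨c, ⟨t, ht, hab⟩, fun x hx => ?_⟩
        rcases List.mem_cons.1 hx with rfl | hx
        · exact mem_componentVerts.2 ⟨t, ht, _, hbd, Sym2.mem_mk_right _ _⟩
        · exact hl x hx

lemma SimpleGraph.TConnected.exists_mem_componentVerts {G : SimpleGraph V} (hT : G.TConnected ↑T)
    {u v : V} (hne : u ≠ v) (hnadj : ¬G.Adj u v) :
    ∃ c : (edgeSharingGraph T).ConnectedComponent, u ∈ componentVerts c ∧ v ∈ componentVerts c := by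
  obtain ⟨p, hp⟩ := hT u v
  cases p with
  | nil => exact absurd rfl hne
  | @cons _ w _ huw q =>
    rw [SimpleGraph.Walk.support_cons, ← q.cons_tail_support] at hp
    have hv : v ∈ q.support.tail := by
      have := q.end_mem_support
      rw [← q.cons_tail_support, List.mem_cons] at this
      exact this.resolve_left fun hvw => hnadj (hvw ▸ huw)
    rcases hp.mem_pair_or_mem_componentVerts with hl | ⟨c, ⟨t, ht, huw'⟩, hl⟩
    · rcases hl v hv with rfl | rfl
      · exact absurd rfl hne
      · exact absurd huw hnadj
    · exact ⟨c, mem_componentVerts.2 ⟨t, ht, _, huw', Sym2.mem_mk_left _ _⟩, hl v hv⟩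

noncomputable def componentNonAdjVerts (G : SimpleGraph V)
    (c : (edgeSharingGraph T).ConnectedComponent) : Finset V :=
  {v ∈ componentVerts c | ∃ u ∈ componentVerts c, Gᶜ.Adj u v}

lemma SimpleGraph.TConnected.exists_mem_componentNonAdjVerts {G : SimpleGraph V}
    (hT : G.TConnected ↑T) {u v : V} (huv : Gᶜ.Adj u v) :
    ∃ c : (edgeSharingGraph T).ConnectedComponent,
      u ∈ componentNonAdjVerts G c ∧ v ∈ componentNonAdjVerts G c := by
  obtain ⟨c, hu, hv⟩ := hT.exists_mem_componentVerts huv.1 huv.2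
  exact ⟨c, mem_filter.2 ⟨hu, v, hv, huv.symm⟩, mem_filter.2 ⟨hv, u, hu, huv⟩⟩

lemma card_componentVerts_le {G : SimpleGraph V} (hT : ∀ t ∈ T, G.IsTransition t)
    (c : (edgeSharingGraph T).ConnectedComponent) : #(componentVerts c) ≤ c.supp.ncard + 2 := by
  obtain ⟨t₀, ht₀⟩ := c.nonempty_supp
  obtain ⟨a, b, d, -, -, -, hat₀⟩ := hT t₀.1 t₀.2
  have hspan := c.card_biUnion_supp_le (fun t => transitionVerts t.1) (k := 1) ?_ ht₀
  · have h₀ := card_transitionVerts_transitionOf_le a b d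
    have hpos : 1 ≤ c.supp.ncard := c.nonempty_supp.ncard_pos
    rw [← hat₀] at h₀
    exact hspan.trans (by omega)
  · rintro t t' ⟨-, e, he, he'⟩
    obtain ⟨a', b', d', -, -, -, ht'⟩ := hT t'.1 t'.2
    rw [ht'] at he' ⊢
    refine (card_le_card (sdiff_subset_sdiff subset_rfl fun x hx => ?_)).trans
      (card_transitionVerts_transitionOf_sdiff_le he')
    exact mem_transitionVerts.2 ⟨e, he, Sym2.mem_toFinset.1 hx⟩

lemma two_mul_card_componentNonAdjVerts_le {G : SimpleGraph V} (hT : ∀ t ∈ T, G.IsTransition t)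
    (c : (edgeSharingGraph T).ConnectedComponent) :
    2 * (#(componentNonAdjVerts G c) - 1) ≤ 3 * c.supp.ncard := by
  obtain ⟨t₀, ht₀⟩ := c.nonempty_supp
  obtain ⟨a, b, d, hab, hbd, -, hat₀⟩ := hT t₀.1 t₀.2
  have hspan := card_componentVerts_le hT c
  have hle : #(componentNonAdjVerts G c) ≤ #(componentVerts c) := card_filter_le _ _
  have hpos : 1 ≤ c.supp.ncard := c.nonempty_supp.ncard_pos
  rcases hpos.eq_or_lt with hsingle | hmany
  · have hsupp : c.supp = {t₀} := by
      obtain ⟨t, ht⟩ := Set.ncard_eq_one.1 hsingle.symm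
      rw [ht] at ht₀ ⊢
      rw [Set.mem_singleton_iff.1 ht₀]
    have hverts : componentVerts c = {a, b, d} := by
      ext x
      simp only [mem_componentVerts, hsupp, Set.mem_singleton_iff, exists_eq_left, hat₀,
        ← mem_transitionVerts, transitionVerts_transitionOf]
    have hW : componentNonAdjVerts G c ⊆ {a, d} := by
      intro v hv
      simp only [componentNonAdjVerts, hverts, mem_filter, mem_insert, mem_singleton,
        SimpleGraph.compl_adj] at hv ⊢
      obtain ⟨hv, u, hu, huv, hnadj⟩ := hv
      rcases hv with rfl | rfl | rfl
      · exact .inl rfl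
      · exfalso
        rcases hu with rfl | rfl | rfl
        · exact hnadj hab
        · exact huv rfl
        · exact hnadj hbd.symm
      · exact .inr rfl
    have hWcard := (card_le_card hW).trans card_le_two
    omega
  · omega

end Transitions

lemma tau_le_sum_ncard_supp_sub_one [Fintype V] (G : SimpleGraph V)
    [Fintype Gᶜ.ConnectedComponent] :
    tau G ≤ ∑ C : Gᶜ.ConnectedComponent, (C.supp.ncard - 1) := by
  unfold tau
  rw [Subsingleton.elim (Fintype.ofFinite Gᶜ.ConnectedComponent) ‹_›]
  exact sum_le_sum fun C _ => by split_ifs <;> omega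

theorem stmt15_general {V : Type*} [Fintype V] (G : SimpleGraph V)
    (T : Finset (Sym2 (Sym2 V)))
    (hT : G.ConnectingTransitionSet T) :
    2 * tau G ≤ 3 * T.card := by
  calc 2 * tau G ≤ 2 * ∑ c, (#(componentNonAdjVerts G c) - 1) :=
        Nat.mul_le_mul_left 2 <| (tau_le_sum_ncard_supp_sub_one G).trans <|
          Gᶜ.sum_ncard_supp_sub_one_le _ fun _ _ => hT.2.exists_mem_componentNonAdjVerts
    _ ≤ ∑ c : (edgeSharingGraph T).ConnectedComponent, 3 * c.supp.ncard := by
        rw [mul_sum]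
        exact sum_le_sum fun c _ => two_mul_card_componentNonAdjVerts_le hT.1 c
    _ = 3 * T.card := by rw [← mul_sum, SimpleGraph.sum_ncard_supp, Nat.card_eq_finsetCard]

/-- For every connected graph `G`, every connecting transition set of `G` has size at
least `(2/3)·τ(G)`. -/
theorem stmt15 {V : Type*} [Fintype V] [DecidableEq V] (G : SimpleGraph V)
    (hc : G.Connected) (T : Finset (Sym2 (Sym2 V)))
    (hT : G.ConnectingTransitionSet T) :
    2 * tau G ≤ 3 * T.card :=
  stmt15_general G T hT
end
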